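/- For every x in [0,1] and every natural number i ≥ 0, ∫_0^{x/3^i} f(t) dt = (2/9)^i · ∫_0^x f(t) dt. -/

import Mathlib

open intervalIntegral Set

/-!
Substituting `t = u / c` turns `∫₀^{x/c} f` into `c⁻¹ ∫₀^x f (u / c) du`, and the scaling law
`f (u / c) = a f(u)` makes this `(a / c) ∫₀^x f`. For `c ≥ 1` the interval `[0, b]` is mapped
into itself by `u ↦ u / c`, so the identity iterates.
-/

theorem integral_zero_div_eq_of_scaling {f : ℝ → ℝ} {a c x : ℝ}
    (hscale : ∀ u ∈ uIcc 0 x, f (u / c) = a * f u) :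
    ∫ t in (0:ℝ)..x / c, f t = a / c * ∫ t in (0:ℝ)..x, f t := by
  have hsubst : ∫ t in (0:ℝ)..x / c, f t = c⁻¹ * ∫ u in (0:ℝ)..x, f (u / c) := by
    rw [← smul_eq_mul, inv_smul_integral_comp_div, zero_div]
  rw [hsubst, integral_congr hscale, integral_const_mul]
  ring

theorem integral_zero_div_pow_eq_of_scaling {f : ℝ → ℝ} {a b c : ℝ} (hc : 1 ≤ c)
    (hscale : ∀ u ∈ Icc 0 b, f (u / c) = a * f u) {x : ℝ} (hx : x ∈ Icc 0 b) (n : ℕ) :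
    ∫ t in (0:ℝ)..x / c ^ n, f t = (a / c) ^ n * ∫ t in (0:ℝ)..x, f t := by
  induction n with
  | zero => simp
  | succ n ih =>
    have hcn : 1 ≤ c ^ n := one_le_pow₀ hc
    have hxn : x / c ^ n ∈ Icc 0 b :=
      ⟨div_nonneg hx.1 (by linarith), (div_le_self hx.1 hcn).trans hx.2⟩
    have hscale' : ∀ u ∈ uIcc 0 (x / c ^ n), f (u / c) = a * f u := by
      rw [uIcc_of_le hxn.1]
      exact fun u hu => hscale u ⟨hu.1, hu.2.trans hxn.2⟩
    rw [pow_succ, ← div_div, integral_zero_div_eq_of_scaling hscale', ih]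
    ring

theorem bourbaki_stmt_general (f : ℝ → ℝ)
    (hw1 : ∀ x ∈ Set.Icc (0:ℝ) 1, f (x / 3) = (2/3) * f x) :
    ∀ x ∈ Set.Icc (0:ℝ) 1, ∀ i : ℕ, ∫ t in (0:ℝ)..(x / 3 ^ i), f t = (2/9) ^ i * ∫ t in (0:ℝ)..x, f t := by
  intro x hx i
  rw [show (2/9 : ℝ) = 2/3/3 by norm_num]
  exact integral_zero_div_pow_eq_of_scaling (by norm_num) hw1 hx i

theorem bourbaki_stmt (f : ℝ → ℝ)
    (hcont : ContinuousOn f (Set.Icc 0 1))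
    (h0 : f 0 = 0) (h1 : f 1 = 1)
    (hw1 : ∀ x ∈ Set.Icc (0:ℝ) 1, f (x / 3) = (2/3) * f x)
    (hw2 : ∀ x ∈ Set.Icc (0:ℝ) 1, f ((2 - x) / 3) = (1/3) * (1 + f x))
    (hw3 : ∀ x ∈ Set.Icc (0:ℝ) 1, f ((2 + x) / 3) = 1/3 + (2/3) * f x) :
    ∀ x ∈ Set.Icc (0:ℝ) 1, ∀ i : ℕ, ∫ t in (0:ℝ)..(x / 3 ^ i), f t = (2/9) ^ i * ∫ t in (0:ℝ)..x, f t :=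
  bourbaki_stmt_general f hw1
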